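/- arXiv:2307.10502 — 4 statements merged into one kernel-verified Lean document; each statement's English description precedes it below -/
import Mathlib

section
/- Let A be a real p×n matrix such that A·Aᵀ is invertible, let x ∈ ℝⁿ and b ∈ ℝᵖ satisfy A·x = b, and let dA be any real p×n matrix. If dx ∈ ℝⁿ satisfies the equation dx = -A†·(dA·x + dA·dx), where A† = Aᵀ·(A·Aᵀ)⁻¹ is the generalized inverse of A, then (A + dA)·(x + dx) = b. -/
open Matrix

/-- If `A·x = b`, `A·Aᵀ` is invertible, and `dx` satisfies the fixed-point
condition `dx = -A†·(dA·x + dA·dx)` with `A† = Aᵀ·(A·Aᵀ)⁻¹`, then `(A+dA)·(x+dx) = b`. -/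
theorem perturbed_solution {p n : ℕ} (A dA : Matrix (Fin p) (Fin n) ℝ)
    (hA : IsUnit (A * Aᵀ)) (x dx : Fin n → ℝ) (b : Fin p → ℝ)
    (hx : A.mulVec x = b)
    (hdx : dx = -(Aᵀ * (A * Aᵀ)⁻¹).mulVec (dA.mulVec x + dA.mulVec dx)) :
    (A + dA).mulVec (x + dx) = b := by
  have hAdx : A.mulVec dx = -(dA.mulVec x + dA.mulVec dx) := by
    conv_lhs => rw [hdx]
    rw [Matrix.mulVec_neg, Matrix.mulVec_mulVec,
      show A * (Aᵀ * (A * Aᵀ)⁻¹) = A * Aᵀ * (A * Aᵀ)⁻¹ from (Matrix.mul_assoc _ _ _).symm,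
      Matrix.mul_nonsing_inv _ ((Matrix.isUnit_iff_isUnit_det _).mp hA),
      Matrix.one_mulVec]
  rw [Matrix.add_mulVec, Matrix.mulVec_add, Matrix.mulVec_add, hx, hAdx]
  abel
end

section
/- Let A be a real p×n matrix such that A·Aᵀ is invertible. Then there exist constants C > 0 and ε₀ > 0 such that for every ε ∈ (0, ε₀], every real p×n matrix dA with operator norm ‖dA‖ ≤ ε, and every dx ∈ ℝⁿ with A·dx = 0 and ‖dx‖₂ ≤ ε, the Euclidean distance from dx to the perturbed solution set 𝒫̃ = {x ∈ ℝⁿ | (A + dA)·x = 0} satisfies inf{‖dx − y‖₂ : y ∈ 𝒫̃} ≤ C·ε². (In other words, a point of the hyperplane 𝒫 = {x | A·x = 0} at distance O(ε) from the origin lies within O(ε²) of the perturbed hyperplane when the perturbation of A is of size O(ε).) -/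
open Matrix

/-- Euclidean norm of a finitely-indexed real vector. -/
noncomputable def euclNorm {ι : Type*} [Fintype ι] (y : ι → ℝ) : ℝ :=
  Real.sqrt (∑ i, (y i) ^ 2)

/-!
Put `P = A + dA` and `S = Aᵀ (P Aᵀ)⁻¹`, a right inverse of `P`. Since `P Aᵀ = A Aᵀ + dA Aᵀ` is an
`O(ε)` perturbation of the invertible `A Aᵀ`, a Neumann series argument makes it invertible with
`‖(P Aᵀ)⁻¹‖ ≤ 2 ‖(A Aᵀ)⁻¹‖` once `ε` is small. Then `y = dx - S P dx` solves `P y = 0`, and because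
`A dx = 0` we get `dx - y = S dA dx`, of norm at most `‖S‖ ‖dA‖ ‖dx‖ = O(ε²)`. All norms of
matrices are `ℓ²` operator norms.
-/

open Ring

section NormedRing

variable {R : Type*} [NormedRing R] [HasSummableGeomSeries R]

theorem IsUnit.add_of_norm_inverse_mul_norm_lt_one {b e : R} (hb : IsUnit b)
    (h : ‖b⁻¹ʳ‖ * ‖e‖ < 1) : IsUnit (b + e) := by
  have ht : ‖-(b⁻¹ʳ * e)‖ < 1 := by rw [norm_neg]; exact (norm_mul_le _ _).trans_lt h
  convert hb.mul (Units.oneSub _ ht).isUnit using 1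
  rw [Units.val_oneSub, sub_neg_eq_add, mul_add, mul_one, mul_inverse_cancel_left _ _ hb]

theorem IsUnit.norm_inverse_add_le {b e : R} (hb : IsUnit b) (h : ‖b⁻¹ʳ‖ * ‖e‖ ≤ 1 / 2) :
    ‖(b + e)⁻¹ʳ‖ ≤ 2 * ‖b⁻¹ʳ‖ := by
  set w := (b + e)⁻¹ʳ
  have hbe : (b + e) * w = 1 :=
    mul_inverse_cancel _ (hb.add_of_norm_inverse_mul_norm_lt_one (by linarith))
  have hw : w = b⁻¹ʳ - b⁻¹ʳ * e * w :=
    calc w = b⁻¹ʳ * ((b + e) * w) - b⁻¹ʳ * e * w := by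
          rw [add_mul, mul_add, inverse_mul_cancel_left _ _ hb, mul_assoc, add_sub_cancel_right]
      _ = b⁻¹ʳ - b⁻¹ʳ * e * w := by rw [hbe, mul_one]
  have : ‖w‖ ≤ ‖b⁻¹ʳ‖ + ‖b⁻¹ʳ‖ * ‖e‖ * ‖w‖ :=
    calc ‖w‖ = ‖b⁻¹ʳ - b⁻¹ʳ * e * w‖ := congrArg _ hw
      _ ≤ ‖b⁻¹ʳ‖ + ‖b⁻¹ʳ * e * w‖ := norm_sub_le _ _
      _ ≤ ‖b⁻¹ʳ‖ + ‖b⁻¹ʳ‖ * ‖e‖ * ‖w‖ := by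
        gcongr; exact (norm_mul_le _ _).trans (by gcongr; exact norm_mul_le _ _)
  nlinarith [norm_nonneg w]

end NormedRing

theorem Matrix.mulVec_sub_mulVec_mulVec_eq_zero {m n R : Type*} [Fintype m] [Fintype n]
    [DecidableEq m] [CommRing R] {M : Matrix m n R} {S : Matrix n m R} (h : M * S = 1)
    (x : n → R) : M *ᵥ (x - S *ᵥ (M *ᵥ x)) = 0 := by
  rw [mulVec_sub, mulVec_mulVec, h, one_mulVec, sub_self]

theorem euclNorm_eq_norm {ι : Type*} [Fintype ι] (y : ι → ℝ) :
    euclNorm y = ‖WithLp.toLp 2 y‖ := by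
  simp [EuclideanSpace.norm_eq, euclNorm]

theorem euclNorm_nonneg {ι : Type*} [Fintype ι] (y : ι → ℝ) : 0 ≤ euclNorm y :=
  Real.sqrt_nonneg _

open scoped Matrix.Norms.L2Operator

section L2OpNorm

variable {m n : Type*} [Fintype m] [Fintype n] [DecidableEq n]

theorem Matrix.euclNorm_mulVec_le (M : Matrix m n ℝ) (v : n → ℝ) :
    euclNorm (M *ᵥ v) ≤ ‖M‖ * euclNorm v := by
  simpa [euclNorm_eq_norm] using M.l2_opNorm_mulVec (WithLp.toLp 2 v)

theorem Matrix.l2_opNorm_le_of_euclNorm_mulVec_le {M : Matrix m n ℝ} {c : ℝ} (hc : 0 ≤ c)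
    (h : ∀ v, euclNorm (M *ᵥ v) ≤ c * euclNorm v) : ‖M‖ ≤ c := by
  refine ContinuousLinearMap.opNorm_le_bound _ hc fun v => ?_
  simpa [euclNorm_eq_norm, Matrix.toLpLin_apply] using h v.ofLp

end L2OpNorm

/-- Let `A` be a real `p×n` matrix with `A·Aᵀ` invertible.  There exist
`C > 0` and `ε₀ > 0` such that for every `ε ∈ (0, ε₀]`, every perturbation `dA` whose
(Euclidean) operator norm is at most `ε` (expressed by `‖dA·v‖₂ ≤ ε·‖v‖₂` for all `v`),
and every `dx` with `A·dx = 0` and `‖dx‖₂ ≤ ε`, the Euclidean distance from `dx` to the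
perturbed solution set `{x | (A+dA)·x = 0}` is at most `C·ε²`. -/
theorem dist_to_perturbed_hyperplane {p n : ℕ}
    (A : Matrix (Fin p) (Fin n) ℝ) (hA : IsUnit (A * Aᵀ)) :
    ∃ C > (0 : ℝ), ∃ ε₀ > (0 : ℝ), ∀ ε : ℝ, 0 < ε → ε ≤ ε₀ →
      ∀ dA : Matrix (Fin p) (Fin n) ℝ,
        (∀ v : Fin n → ℝ, euclNorm (dA.mulVec v) ≤ ε * euclNorm v) →
        ∀ dx : Fin n → ℝ, A.mulVec dx = 0 → euclNorm dx ≤ ε →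
          sInf {d : ℝ | ∃ y : Fin n → ℝ, (A + dA).mulVec y = 0 ∧ d = euclNorm (dx - y)}
            ≤ C * ε ^ 2 := by
  set α := ‖Aᵀ‖
  set β := ‖(A * Aᵀ)⁻¹ʳ‖
  have hαβ : 0 < α * β + 1 := by positivity
  refine ⟨2 * α * β + 1, by positivity, 1 / (2 * (α * β + 1)), by positivity,
    fun ε hε hεε₀ dA hdA dx hdx hdxε => ?_⟩
  have hdA_norm : ‖dA‖ ≤ ε := l2_opNorm_le_of_euclNorm_mulVec_le hε.le hdA
  have hsmall : β * ‖dA * Aᵀ‖ ≤ 1 / 2 :=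
    calc β * ‖dA * Aᵀ‖ ≤ β * (‖dA‖ * α) := by gcongr; exact l2_opNorm_mul _ _
      _ = ‖dA‖ * (α * β) := by ring
      _ ≤ 1 / (2 * (α * β + 1)) * (α * β + 1) :=
        mul_le_mul (hdA_norm.trans hεε₀) (by linarith) (by positivity) (by positivity)
      _ = 1 / 2 := by field_simp
  obtain ⟨S, hS, hS_norm⟩ :
      ∃ S : Matrix (Fin n) (Fin p) ℝ, (A + dA) * S = 1 ∧ ‖S‖ ≤ α * (2 * β) := by
    refine ⟨Aᵀ * ((A + dA) * Aᵀ)⁻¹ʳ, ?_, (l2_opNorm_mul _ _).trans ?_⟩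
    · rw [← Matrix.mul_assoc, Matrix.add_mul]
      exact mul_inverse_cancel _ (hA.add_of_norm_inverse_mul_norm_lt_one (by linarith))
    · gcongr
      rw [Matrix.add_mul]
      exact hA.norm_inverse_add_le hsmall
  have hdx_sub : dx - (dx - S *ᵥ ((A + dA) *ᵥ dx)) = S *ᵥ (dA *ᵥ dx) := by
    rw [sub_sub_cancel, add_mulVec, hdx, zero_add]
  calc sInf {d : ℝ | ∃ y : Fin n → ℝ, (A + dA).mulVec y = 0 ∧ d = euclNorm (dx - y)}
      ≤ euclNorm (S *ᵥ (dA *ᵥ dx)) :=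
        csInf_le ⟨0, by rintro _ ⟨y, -, rfl⟩; exact euclNorm_nonneg _⟩
          ⟨_, mulVec_sub_mulVec_mulVec_eq_zero hS dx, congrArg euclNorm hdx_sub.symm⟩
    _ ≤ ‖S‖ * (‖dA‖ * euclNorm dx) :=
        (euclNorm_mulVec_le _ _).trans (by gcongr; exact euclNorm_mulVec_le _ _)
    _ ≤ α * (2 * β) * (ε * ε) := by have := euclNorm_nonneg dx; gcongr
    _ ≤ (2 * α * β + 1) * ε ^ 2 := by nlinarith
end

section
/- Let f : ℝⁿ → ℝ be continuously differentiable, let X = {x ∈ ℝⁿ | f(x) = 0}, and let z ∈ X be such that ∇f(z) ≠ 0. Let K ≥ 0 and let [a] be a K-gradient-enclosure for f. Then the centered map ℒ, defined on boxes by ℒ([x]) = {x ∈ [x] | ∃a ∈ [a]([x]), f(m) + ⟨a, x − m⟩ = 0} where m is the center of [x], is a wrapper for X which has order 1 at z. -/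
open Classical Filter Topology

/-- An axis-aligned box of `ℝⁿ`: a product of nonempty compact intervals. -/
structure Box (n : ℕ) where
  lower : Fin n → ℝ
  upper : Fin n → ℝ
  lower_le_upper : ∀ i, lower i ≤ upper i

namespace Box

/-- The set of points of a box. -/
def pts {n : ℕ} (B : Box n) : Set (Fin n → ℝ) :=
  {x | ∀ i, x i ∈ Set.Icc (B.lower i) (B.upper i)}

/-- The width of a box: the largest edge length. -/
noncomputable def width {n : ℕ} (B : Box n) : ℝ := ⨆ i, (B.upper i - B.lower i)

/-- The center of a box. -/
noncomputable def center {n : ℕ} (B : Box n) : Fin n → ℝ :=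
  fun i => (B.lower i + B.upper i) / 2

end Box

/-- Proximity `h(A, X) = sup_{a ∈ A} inf_{x ∈ X} ‖a − x‖∞` of a set `A` to a set `X`
(the norm on `Fin n → ℝ` is the sup norm); the convention `h(∅, X) = 0` holds since a
supremum over an empty index set is `0` in `ℝ`. -/
noncomputable def prox {n : ℕ} (A X : Set (Fin n → ℝ)) : ℝ :=
  ⨆ a : A, Metric.infDist (a : Fin n → ℝ) X

/-- A nested sequence of boxes converging to the point `z` (in the sup norm). -/
def ConvergesTo {n : ℕ} (B : ℕ → Box n) (z : Fin n → ℝ) : Prop :=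
  (∀ k, (B (k + 1)).pts ⊆ (B k).pts) ∧
  Tendsto (fun k => ⨆ p : (B k).pts, ‖(p : Fin n → ℝ) - z‖) atTop (𝓝 0)

/-- A wrapper for `X`: contraction, consistency, and accuracy. -/
def IsWrapper {n : ℕ} (X : Set (Fin n → ℝ)) (W : Box n → Set (Fin n → ℝ)) : Prop :=
  (∀ B : Box n, W B ⊆ B.pts) ∧
  (∀ B : Box n, B.pts ∩ X ⊆ W B) ∧
  (∀ x : Fin n → ℝ, x ∉ X → ∃ ε > (0 : ℝ), ∀ B : Box n,
      B.pts ⊆ Metric.closedBall x ε → W B = ∅)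

/-- The wrapper `W` for `X` has order `1` at `z`: for every nested sequence of boxes
converging to `z`, `h(W([x](k)), X) / w([x](k)) → 0`. -/
def HasOrderOne {n : ℕ} (X : Set (Fin n → ℝ)) (W : Box n → Set (Fin n → ℝ))
    (z : Fin n → ℝ) : Prop :=
  ∀ B : ℕ → Box n, ConvergesTo B z →
    Tendsto (fun k => prox (W (B k)) X / (B k).width) atTop (𝓝 0)

/-- The box hull `⟦A⟧` of a set `A ⊆ ℝⁿ`: the smallest box containing `A`
(with `⟦∅⟧ = ∅`). -/
noncomputable def boxHull {n : ℕ} (A : Set (Fin n → ℝ)) : Set (Fin n → ℝ) :=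
  if A = ∅ then ∅
  else {x | ∀ i, (⨅ a : A, (a : Fin n → ℝ) i) ≤ x i ∧ x i ≤ ⨆ a : A, (a : Fin n → ℝ) i}

/-- A contractor for `X`: a map from boxes to boxes (the empty set is allowed as a value)
satisfying contraction and consistency. -/
def IsContractor {n : ℕ} (X : Set (Fin n → ℝ)) (C : Box n → Set (Fin n → ℝ)) : Prop :=
  (∀ B : Box n, (∃ B' : Box n, C B = B'.pts) ∨ C B = ∅) ∧
  (∀ B : Box n, C B ⊆ B.pts) ∧
  (∀ B : Box n, B.pts ∩ X ⊆ C B)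

/-- The contractor `C` for `X` is asymptotically minimal at `z`: for every nested sequence
of boxes containing `z` and converging to `z`,
`h(C([x](k)), ⟦[x](k) ∩ X⟧) / w([x](k)) → 0`. -/
def AsympMinimal {n : ℕ} (X : Set (Fin n → ℝ)) (C : Box n → Set (Fin n → ℝ))
    (z : Fin n → ℝ) : Prop :=
  ∀ B : ℕ → Box n, ConvergesTo B z → (∀ k, z ∈ (B k).pts) →
    Tendsto (fun k => prox (C (B k)) (boxHull ((B k).pts ∩ X)) / (B k).width)
      atTop (𝓝 0)

/-- The gradient of `f : ℝⁿ → ℝ` at `x`, as the vector of partial derivatives. -/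
noncomputable def grad {n : ℕ} (f : (Fin n → ℝ) → ℝ) (x : Fin n → ℝ) : Fin n → ℝ :=
  fun j => fderiv ℝ f x (Pi.single j 1)

/-- A `K`-gradient-enclosure for `f`: a map assigning to every box `[x]` an interval
vector (a box) `[a]([x])` containing `∇f(x)` for every `x ∈ [x]`, whose width is at most
`K · w([x])`. -/
def IsGradEnclosure {n : ℕ} (f : (Fin n → ℝ) → ℝ) (K : ℝ) (a : Box n → Box n) : Prop :=
  ∀ B : Box n, (∀ x ∈ B.pts, grad f x ∈ (a B).pts) ∧ (a B).width ≤ K * B.width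

/-- The centered map associated with `f` and a gradient enclosure `a`:
`ℒ([x]) = {x ∈ [x] | ∃ α ∈ [a]([x]), f(m) + ⟨α, x − m⟩ = 0}`, `m = center([x])`. -/
noncomputable def centeredMap {n : ℕ} (f : (Fin n → ℝ) → ℝ) (a : Box n → Box n)
    (B : Box n) : Set (Fin n → ℝ) :=
  {x ∈ B.pts | ∃ α ∈ (a B).pts, f B.center + ∑ j, α j * (x j - B.center j) = 0}

/-!
The centered form `f(m) + ⟨α, x − m⟩` is an affine model of `f` on `[x]`; by the mean value
theorem `f(x) = f(m) + ⟨∇f(ξ), x − m⟩` with `ξ ∈ [x]`, so every point of `ℒ([x])` satisfies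
`|f(x)| ≤ n·K·w([x])²/2`, the gradient enclosure having width `≤ K·w([x])`. The same identity
gives consistency (take `α = ∇f(ξ)`), and continuity of `f` turns the quadratic residual bound
into accuracy. For the order, `∇f(z) ≠ 0` yields a local error bound
`dist(y, X) ≤ C·|f(y)|` near `z` (move along a direction in which `f` grows at rate `≥ 1/2` and
apply the intermediate value theorem), so `h(ℒ([x](k)), X) = O(w([x](k))²)`.
-/

open Metric Set

namespace Box

variable {n : ℕ} (B : Box n)

lemma pts_eq_pi : B.pts = univ.pi fun i => Icc (B.lower i) (B.upper i) := by
  ext x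
  simp only [pts, mem_ofPred_eq, mem_univ_pi]

lemma convex_pts : Convex ℝ B.pts :=
  B.pts_eq_pi ▸ convex_pi fun _ _ => convex_Icc _ _

lemma isCompact_pts : IsCompact B.pts :=
  B.pts_eq_pi ▸ isCompact_univ_pi fun _ => isCompact_Icc

lemma lower_mem_pts : B.lower ∈ B.pts := fun i => ⟨le_rfl, B.lower_le_upper i⟩

lemma upper_mem_pts : B.upper ∈ B.pts := fun i => ⟨B.lower_le_upper i, le_rfl⟩

lemma center_mem_pts : B.center ∈ B.pts := fun i => by
  have := B.lower_le_upper i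
  constructor <;> simp only [center] <;> linarith

lemma width_nonneg : 0 ≤ B.width :=
  Real.iSup_nonneg fun i => sub_nonneg.2 (B.lower_le_upper i)

lemma sub_le_width (i : Fin n) : B.upper i - B.lower i ≤ B.width :=
  le_ciSup (f := fun i => B.upper i - B.lower i) (finite_range _).bddAbove i

lemma pts_subset_closedBall (z : Fin n → ℝ) :
    B.pts ⊆ closedBall z (⨆ p : B.pts, ‖(p : Fin n → ℝ) - z‖) := fun p hp => by
  have hbdd : BddAbove (range fun p : B.pts => ‖(p : Fin n → ℝ) - z‖) :=
    image_eq_range (fun p => ‖p - z‖) B.pts ▸ B.isCompact_pts.bddAbove_image (by fun_prop)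
  rw [mem_closedBall, dist_eq_norm]
  exact le_ciSup hbdd ⟨p, hp⟩

variable {B}

lemma abs_sub_le_width {p q : Fin n → ℝ} (hp : p ∈ B.pts) (hq : q ∈ B.pts) (i : Fin n) :
    |p i - q i| ≤ B.width := by
  have := B.sub_le_width i
  obtain ⟨hp₁, hp₂⟩ := hp i
  obtain ⟨hq₁, hq₂⟩ := hq i
  rw [abs_le]
  constructor <;> linarith

lemma abs_sub_center_le {p : Fin n → ℝ} (hp : p ∈ B.pts) (i : Fin n) :
    |p i - B.center i| ≤ B.width / 2 := by
  have := B.sub_le_width i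
  obtain ⟨hp₁, hp₂⟩ := hp i
  rw [abs_le]
  constructor <;> simp only [center] <;> linarith

lemma width_le_of_pts_subset_closedBall {x : Fin n → ℝ} {r : ℝ} (h : B.pts ⊆ closedBall x r) :
    B.width ≤ 2 * r := by
  have hr : 0 ≤ r := dist_nonneg.trans (h B.center_mem_pts)
  refine Real.iSup_le (fun i => ?_) (by positivity)
  calc B.upper i - B.lower i ≤ dist B.upper B.lower :=
        (le_abs_self _).trans <| (Real.dist_eq _ _).symm.trans_le (dist_le_pi_dist _ _ i)
    _ ≤ dist B.upper x + dist B.lower x := dist_triangle_right _ _ _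
    _ ≤ 2 * r := by
        linarith [mem_closedBall.1 (h B.upper_mem_pts), mem_closedBall.1 (h B.lower_mem_pts)]

end Box

lemma prox_nonneg {n : ℕ} (A X : Set (Fin n → ℝ)) : 0 ≤ prox A X :=
  Real.iSup_nonneg fun _ => infDist_nonneg

lemma prox_le {n : ℕ} {A X : Set (Fin n → ℝ)} {b : ℝ} (hb : 0 ≤ b)
    (h : ∀ y ∈ A, infDist y X ≤ b) : prox A X ≤ b :=
  Real.iSup_le (fun y => h y y.2) hb

lemma ContinuousLinearMap.apply_eq_sum_mul {n : ℕ} (L : (Fin n → ℝ) →L[ℝ] ℝ)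
    (v : Fin n → ℝ) : L v = ∑ j, L (Pi.single j 1) * v j := by
  conv_lhs => rw [← Finset.univ_sum_single v]
  refine (map_sum L _ _).trans (Finset.sum_congr rfl fun j _ => ?_)
  rw [show Pi.single j (v j) = v j • Pi.single j (1 : ℝ) by rw [← Pi.single_smul', smul_eq_mul,
    mul_one], L.map_smul, smul_eq_mul, mul_comm]

lemma exists_mem_pts_eq_add_sum_grad {n : ℕ} {f : (Fin n → ℝ) → ℝ} (hf : Differentiable ℝ f)
    (B : Box n) {y : Fin n → ℝ} (hy : y ∈ B.pts) :
    ∃ ξ ∈ B.pts, f y = f B.center + ∑ j, grad f ξ j * (y j - B.center j) := by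
  obtain ⟨ξ, hξ, hmvt⟩ := domain_mvt (fun x _ => (hf x).hasFDerivAt.hasFDerivWithinAt)
    B.convex_pts B.center_mem_pts hy
  refine ⟨ξ, B.convex_pts.segment_subset B.center_mem_pts hy hξ, ?_⟩
  rw [(fderiv ℝ f ξ).apply_eq_sum_mul] at hmvt
  simp only [grad, Pi.sub_apply] at hmvt ⊢
  linarith

lemma exists_mem_Icc_eq_zero_of_le_hasDerivAt {g g' : ℝ → ℝ} {c r : ℝ}
    (hg : ∀ t, HasDerivAt g (g' t) t) (hg' : ∀ t ∈ Icc (-r) r, c ≤ g' t) (hr : 0 ≤ r)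
    (h0 : |g 0| ≤ c * r) : ∃ t ∈ Icc (-r) r, g t = 0 := by
  have hmono : MonotoneOn (fun t => g t - c * t) (Icc (-r) r) :=
    monotoneOn_of_hasDerivWithinAt_nonneg (convex_Icc _ _)
      (fun t _ => ((hg t).continuousAt.sub (continuousAt_const.mul continuousAt_id))
        |>.continuousWithinAt)
      (fun t _ => ((hg t).sub ((hasDerivAt_id t).const_mul c)).hasDerivWithinAt)
      (fun t ht => by simpa using hg' t (interior_subset ht))
  have hleft := hmono ⟨le_rfl, by linarith⟩ ⟨by linarith, hr⟩ (by linarith : -r ≤ 0)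
  have hright := hmono ⟨by linarith, hr⟩ ⟨by linarith, le_rfl⟩ hr
  simp only [mul_zero, sub_zero, mul_neg, sub_neg_eq_add] at hleft hright
  exact intermediate_value_Icc (by linarith) (fun t _ => (hg t).continuousAt.continuousWithinAt)
    ⟨by linarith [le_abs_self (g 0)], by linarith [neg_abs_le (g 0)]⟩

lemma exists_infDist_le_mul_abs_of_fderiv_ne_zero {E : Type*} [NormedAddCommGroup E]
    [NormedSpace ℝ E] {f : E → ℝ} (hf : ContDiff ℝ 1 f) {z : E} (hz : fderiv ℝ f z ≠ 0) :
    ∃ C ≥ 0, ∃ δ > 0, ∀ y, ‖y - z‖ ≤ δ → |f y| ≤ δ →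
      infDist y {x | f x = 0} ≤ C * |f y| := by
  obtain ⟨u, hu⟩ : ∃ u, fderiv ℝ f z u ≠ 0 := by
    by_contra! h
    exact hz (ContinuousLinearMap.ext h)
  set v := (fderiv ℝ f z u)⁻¹ • u
  have hv : fderiv ℝ f z v = 1 := by simp [v, hu]
  obtain ⟨ρ, hρ, hgrowth⟩ : ∃ ρ > 0, ∀ w ∈ closedBall z ρ, 1 / 2 ≤ fderiv ℝ f w v := by
    have hcont : Continuous fun w => fderiv ℝ f w v :=
      (hf.continuous_fderiv one_ne_zero).clm_apply continuous_const
    obtain ⟨ρ, hρ, h⟩ := nhds_basis_closedBall.eventually_iff.1 <|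
      hcont.continuousAt.eventually_const_lt
        (show (1 / 2 : ℝ) < fderiv ℝ f z v by rw [hv]; norm_num)
    exact ⟨ρ, hρ, fun w hw => (h hw).le⟩
  -- `δ` keeps `y + t • v` inside `closedBall z ρ` for `|t| ≤ 2 * |f y|`.
  refine ⟨2 * ‖v‖, by positivity, min (ρ / 2) (ρ / (4 * ‖v‖ + 1)), by positivity,
    fun y hy hfy => ?_⟩
  have hfyv : 4 * (|f y| * ‖v‖) ≤ ρ := by
    have := (le_div_iff₀ (by positivity)).1 (hfy.trans (min_le_right _ _))
    nlinarith [abs_nonneg (f y)]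
  have hline (t : ℝ) : HasDerivAt (fun t => f (y + t • v)) (fderiv ℝ f (y + t • v) v) t :=
    (hf.differentiable one_ne_zero _).hasFDerivAt.comp_hasDerivAt t
      (by simpa using ((hasDerivAt_id t).smul_const v).const_add y)
  have hstep {t : ℝ} (ht : t ∈ Icc (-(2 * |f y|)) (2 * |f y|)) : |t| * ‖v‖ ≤ 2 * ‖v‖ * |f y| := by
    nlinarith [abs_le.2 ht, norm_nonneg v]
  have hball {t : ℝ} (ht : t ∈ Icc (-(2 * |f y|)) (2 * |f y|)) : y + t • v ∈ closedBall z ρ := by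
    rw [mem_closedBall, dist_eq_norm, add_sub_right_comm]
    calc ‖y - z + t • v‖ ≤ ‖y - z‖ + |t| * ‖v‖ := by
          simpa [norm_smul] using norm_add_le (y - z) (t • v)
      _ ≤ ρ := by linarith [hy.trans (min_le_left _ _), hstep ht]
  obtain ⟨t, ht, hzero⟩ := exists_mem_Icc_eq_zero_of_le_hasDerivAt hline
    (fun t ht => hgrowth _ (hball ht)) (by positivity) (by simp)
  calc infDist y {x | f x = 0} ≤ dist y (y + t • v) := infDist_le_dist_of_mem hzero
    _ = |t| * ‖v‖ := by simp [dist_eq_norm, norm_smul]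
    _ ≤ 2 * ‖v‖ * |f y| := hstep ht

section CenteredMap

variable {n : ℕ} {f : (Fin n → ℝ) → ℝ} {a : Box n → Box n} {B : Box n}

lemma inter_zeroSet_subset_centeredMap (hf : Differentiable ℝ f)
    (ha : ∀ x ∈ B.pts, grad f x ∈ (a B).pts) : B.pts ∩ {x | f x = 0} ⊆ centeredMap f a B := by
  rintro y ⟨hy, hfy⟩
  obtain ⟨ξ, hξ, hmvt⟩ := exists_mem_pts_eq_add_sum_grad hf B hy
  exact ⟨hy, grad f ξ, ha ξ hξ, hmvt.symm.trans hfy⟩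

lemma abs_le_of_mem_centeredMap (hf : Differentiable ℝ f)
    (ha : ∀ x ∈ B.pts, grad f x ∈ (a B).pts) {y : Fin n → ℝ} (hy : y ∈ centeredMap f a B) :
    |f y| ≤ n * ((a B).width * (B.width / 2)) := by
  obtain ⟨hyB, α, hα, hlin⟩ := hy
  obtain ⟨ξ, hξ, hmvt⟩ := exists_mem_pts_eq_add_sum_grad hf B hyB
  have hfy : f y = ∑ j, (grad f ξ j - α j) * (y j - B.center j) := by
    simp only [sub_mul, Finset.sum_sub_distrib]
    linarith
  calc |f y| ≤ ∑ j, |grad f ξ j - α j| * |y j - B.center j| := by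
        rw [hfy]
        simpa only [abs_mul] using Finset.abs_sum_le_sum_abs
          (fun j => (grad f ξ j - α j) * (y j - B.center j)) Finset.univ
    _ ≤ ∑ _j : Fin n, (a B).width * (B.width / 2) := Finset.sum_le_sum fun j _ =>
        mul_le_mul (Box.abs_sub_le_width (ha ξ hξ) hα j) (Box.abs_sub_center_le hyB j)
          (abs_nonneg _) (a B).width_nonneg
    _ = n * ((a B).width * (B.width / 2)) := by simp

lemma IsGradEnclosure.abs_le_mul_width_sq {K : ℝ} (ha : IsGradEnclosure f K a)
    (hf : Differentiable ℝ f) {y : Fin n → ℝ} (hy : y ∈ centeredMap f a B) :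
    |f y| ≤ n * K / 2 * B.width ^ 2 :=
  calc |f y| ≤ n * ((a B).width * (B.width / 2)) := abs_le_of_mem_centeredMap hf (ha B).1 hy
    _ ≤ n * (K * B.width * (B.width / 2)) := by
        have := B.width_nonneg
        gcongr
        exact (ha B).2
    _ = n * K / 2 * B.width ^ 2 := by ring

end CenteredMap

section QuadraticResidual

variable {n : ℕ} {f : (Fin n → ℝ) → ℝ} {W : Box n → Set (Fin n → ℝ)} {M : ℝ}

lemma exists_eq_empty_of_abs_le_mul_width_sq (hf : Continuous f) (hW : ∀ B, W B ⊆ B.pts)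
    (hM : 0 ≤ M) (hbound : ∀ B, ∀ y ∈ W B, |f y| ≤ M * B.width ^ 2) {x : Fin n → ℝ}
    (hx : f x ≠ 0) : ∃ ε > 0, ∀ B : Box n, B.pts ⊆ closedBall x ε → W B = ∅ := by
  have hfx : 0 < |f x| / 2 := half_pos (abs_pos.2 hx)
  obtain ⟨δ, hδ, hnear⟩ := nhds_basis_closedBall.eventually_iff.1 <|
    hf.abs.continuousAt.eventually_const_lt (half_lt_self (abs_pos.2 hx))
  have hsmall : ∀ᶠ ε in 𝓝 (0 : ℝ), ε ≤ δ ∧ M * (2 * ε) ^ 2 < |f x| / 2 :=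
    (eventually_le_nhds hδ).and <|
      (by simpa using ((continuous_const.mul continuous_id).pow 2).const_mul M |>.tendsto 0 :
        Tendsto (fun ε : ℝ => M * (2 * ε) ^ 2) (𝓝 0) (𝓝 0)).eventually (gt_mem_nhds hfx)
  obtain ⟨ε, ⟨hεδ, hεM⟩, hε⟩ := ((hsmall.filter_mono nhdsWithin_le_nhds).and
    (self_mem_nhdsWithin : Ioi (0 : ℝ) ∈ 𝓝[>] 0)).exists
  refine ⟨ε, hε, fun B hB => eq_empty_of_forall_notMem fun y hy => ?_⟩
  have hw := B.width_le_of_pts_subset_closedBall hB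
  have hy' : |f x| / 2 < |f y| := hnear (closedBall_subset_closedBall hεδ (hB (hW B hy)))
  have : M * B.width ^ 2 ≤ M * (2 * ε) ^ 2 := by
    have := B.width_nonneg
    gcongr
  linarith [hbound B y hy]

lemma hasOrderOne_of_abs_le_mul_width_sq (hW : ∀ B, W B ⊆ B.pts) (hM : 0 ≤ M)
    (hbound : ∀ B, ∀ y ∈ W B, |f y| ≤ M * B.width ^ 2) {z : Fin n → ℝ} {C δ : ℝ} (hC : 0 ≤ C)
    (hδ : 0 < δ) (herr : ∀ y, ‖y - z‖ ≤ δ → |f y| ≤ δ → infDist y {x | f x = 0} ≤ C * |f y|) :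
    HasOrderOne {x | f x = 0} W z := by
  intro B hB
  set s := fun k => ⨆ p : (B k).pts, ‖(p : Fin n → ℝ) - z‖
  have hs : Tendsto s atTop (𝓝 0) := hB.2
  have hsmall : ∀ᶠ k in atTop, s k ≤ δ ∧ M * (2 * s k) ^ 2 ≤ δ :=
    (hs.eventually (eventually_le_nhds hδ)).and <|
      (by simpa using ((hs.const_mul 2).pow 2).const_mul M :
        Tendsto (fun k => M * (2 * s k) ^ 2) atTop (𝓝 0)).eventually (eventually_le_nhds hδ)
  refine squeeze_zero' (.of_forall fun k => div_nonneg (prox_nonneg _ _) (B k).width_nonneg) ?_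
    (by simpa using hs.const_mul (2 * C * M))
  filter_upwards [hsmall] with k ⟨hsδ, hMδ⟩
  have hw0 := (B k).width_nonneg
  have hball := (B k).pts_subset_closedBall z
  have hw := (B k).width_le_of_pts_subset_closedBall hball
  have hCMw : 0 ≤ C * M * (B k).width := by positivity
  have hprox : prox (W (B k)) {x | f x = 0} ≤ C * M * (B k).width * (B k).width := by
    refine prox_le (by positivity) fun y hy => ?_
    have hyz : ‖y - z‖ ≤ s k := by simpa [dist_eq_norm] using hball (hW _ hy)
    have hfy := hbound _ y hy
    have : M * (B k).width ^ 2 ≤ M * (2 * s k) ^ 2 := by gcongr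
    calc infDist y {x | f x = 0} ≤ C * |f y| := herr y (hyz.trans hsδ) (by linarith)
      _ ≤ C * (M * (B k).width ^ 2) := by gcongr
      _ = C * M * (B k).width * (B k).width := by ring
  calc prox (W (B k)) {x | f x = 0} / (B k).width ≤ C * M * (B k).width :=
        div_le_of_le_mul₀ hw0 hCMw hprox
    _ ≤ 2 * C * M * s k := by nlinarith [mul_nonneg hC hM]

end QuadraticResidual

theorem centeredMap_isWrapper_hasOrderOne_general {n : ℕ}
    (f : (Fin n → ℝ) → ℝ) (hf : ContDiff ℝ 1 f)
    (X : Set (Fin n → ℝ)) (hX : X = {x | f x = 0})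
    (z : Fin n → ℝ) (hgrad : grad f z ≠ 0)
    (K : ℝ) (hK : 0 ≤ K) (a : Box n → Box n) (ha : IsGradEnclosure f K a) :
    IsWrapper X (centeredMap f a) ∧ HasOrderOne X (centeredMap f a) z := by
  subst hX
  have hdiff : Differentiable ℝ f := hf.differentiable one_ne_zero
  have hW : ∀ B, centeredMap f a B ⊆ B.pts := fun _ _ hy => hy.1
  have hM : 0 ≤ n * K / 2 := by positivity
  have hbound : ∀ B, ∀ y ∈ centeredMap f a B, |f y| ≤ n * K / 2 * B.width ^ 2 :=
    fun _ _ hy => ha.abs_le_mul_width_sq hdiff hy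
  have hfderiv : fderiv ℝ f z ≠ 0 := fun h => hgrad (funext fun j => by simp [grad, h])
  obtain ⟨C, hC, δ, hδ, herr⟩ := exists_infDist_le_mul_abs_of_fderiv_ne_zero hf hfderiv
  exact ⟨⟨hW, fun B => inter_zeroSet_subset_centeredMap hdiff (ha B).1,
      fun x hx => exists_eq_empty_of_abs_le_mul_width_sq hf.continuous hW hM hbound hx⟩,
    hasOrderOne_of_abs_le_mul_width_sq hW hM hbound hC hδ herr⟩

/-- The centered map `ℒ([x]) = {x ∈ [x] | ∃ a ∈ [a]([x]),
f(m) + ⟨a, x − m⟩ = 0}` built from a `K`-gradient-enclosure `[a]` of the continuously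
differentiable `f` is a wrapper of order 1 at `z` for `X = {x | f(x) = 0}`, provided
`∇f(z) ≠ 0`. -/
theorem centeredMap_isWrapper_hasOrderOne {n : ℕ}
    (f : (Fin n → ℝ) → ℝ) (hf : ContDiff ℝ 1 f)
    (X : Set (Fin n → ℝ)) (hX : X = {x | f x = 0})
    (z : Fin n → ℝ) (hz : z ∈ X) (hgrad : grad f z ≠ 0)
    (K : ℝ) (hK : 0 ≤ K) (a : Box n → Box n) (ha : IsGradEnclosure f K a) :
    IsWrapper X (centeredMap f a) ∧ HasOrderOne X (centeredMap f a) z :=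
  centeredMap_isWrapper_hasOrderOne_general f hf X hX z hgrad K hK a ha
end

section
/- Let n ≥ 1, let [a₁], …, [aₙ] and [x₁], …, [xₙ] be nonempty compact intervals of ℝ, let c ∈ ℝ and m ∈ ℝⁿ, and let i ∈ {1, …, n} be an index with 0 ∉ [aᵢ]. Define S = {x ∈ ∏ⱼ[xⱼ] | ∃a ∈ ∏ⱼ[aⱼ], c + Σ_{j=1}^{n} aⱼ·(xⱼ − mⱼ) = 0}. Then the projection of S onto the i-th coordinate satisfies {xᵢ | x ∈ S} = [xᵢ] ∩ {mᵢ − s/α | α ∈ [aᵢ], s ∈ Σᵢ}, where Σᵢ = {c + Σ_{j≠i} aⱼ·(xⱼ − mⱼ) | aⱼ ∈ [aⱼ] and xⱼ ∈ [xⱼ] for all j ≠ i}. (This expresses that forward–backward interval propagation on the centered linear constraint, in which each variable occurs only once, returns the exact coordinatewise hull of the solution set.) -/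
/-- Exactness of forward–backward interval propagation on the centered
linear constraint `c + Σⱼ aⱼ(xⱼ − mⱼ) = 0`: if `0 ∉ [aᵢ]`, the projection on the `i`-th
coordinate of the solution set
`S = {x ∈ ∏ⱼ[xⱼ] | ∃ a ∈ ∏ⱼ[aⱼ], c + Σⱼ aⱼ(xⱼ − mⱼ) = 0}` equals
`[xᵢ] ∩ {mᵢ − s/α | α ∈ [aᵢ], s ∈ Σᵢ}`, where
`Σᵢ = {c + Σ_{j≠i} aⱼ(xⱼ − mⱼ) | aⱼ ∈ [aⱼ], xⱼ ∈ [xⱼ] for j ≠ i}`. -/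
theorem forward_backward_propagation_exact {n : ℕ} (hn : 1 ≤ n)
    (al au xl xu : Fin n → ℝ)
    (ha : ∀ j, al j ≤ au j) (hx : ∀ j, xl j ≤ xu j)
    (c : ℝ) (m : Fin n → ℝ) (i : Fin n)
    (hi : (0 : ℝ) ∉ Set.Icc (al i) (au i)) :
    {t : ℝ | ∃ x : Fin n → ℝ,
        ((∀ j, x j ∈ Set.Icc (xl j) (xu j)) ∧
          ∃ a : Fin n → ℝ, (∀ j, a j ∈ Set.Icc (al j) (au j)) ∧
            c + ∑ j, a j * (x j - m j) = 0) ∧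
        x i = t}
      = Set.Icc (xl i) (xu i) ∩
        {t : ℝ | ∃ α ∈ Set.Icc (al i) (au i),
          ∃ s ∈ {s : ℝ | ∃ a x : Fin n → ℝ,
              (∀ j, j ≠ i → a j ∈ Set.Icc (al j) (au j) ∧ x j ∈ Set.Icc (xl j) (xu j)) ∧
              s = c + ∑ j ∈ Finset.univ.erase i, a j * (x j - m j)},
          t = m i - s / α} := by
  ext t
  constructor
  · rintro ⟨x, ⟨hxm, a, ham, heq⟩, rfl⟩
    have hα : a i ≠ 0 := fun h => hi (h ▸ ham i)
    refine ⟨hxm i, a i, ham i, c + ∑ j ∈ Finset.univ.erase i, a j * (x j - m j),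
      ⟨a, x, fun j hj => ⟨ham j, hxm j⟩, rfl⟩, ?_⟩
    have hsum : a i * (x i - m i) + ∑ j ∈ Finset.univ.erase i, a j * (x j - m j)
        = ∑ j, a j * (x j - m j) := Finset.add_sum_erase _ (fun j => a j * (x j - m j)) (Finset.mem_univ i)
    field_simp
    nlinarith [hsum, heq]
  · rintro ⟨hti, α, hαm, s, ⟨a, x, hax, rfl⟩, rfl⟩
    have hα : α ≠ 0 := fun h => hi (h ▸ hαm)
    set s := c + ∑ j ∈ Finset.univ.erase i, a j * (x j - m j) with hs
    refine ⟨Function.update x i (m i - s / α), ⟨?_, Function.update a i α, ?_, ?_⟩,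
      Function.update_self i _ x⟩
    · intro j
      rcases eq_or_ne j i with rfl | hj
      · simpa using hti
      · simpa [Function.update_of_ne hj] using (hax j hj).2
    · intro j
      rcases eq_or_ne j i with rfl | hj
      · simpa using hαm
      · simpa [Function.update_of_ne hj] using (hax j hj).1
    · have hsum : (∑ j, Function.update a i α j * (Function.update x i (m i - s / α) j - m j))
          = α * ((m i - s / α) - m i) +
            ∑ j ∈ Finset.univ.erase i, a j * (x j - m j) := by
        rw [← Finset.add_sum_erase _ _ (Finset.mem_univ i)]
        congr 1
        · simp
        · exact Finset.sum_congr rfl fun j hj => by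
            simp [Function.update_of_ne (Finset.ne_of_mem_erase hj)]
      rw [hsum]
      field_simp
      linarith [Finset.add_sum_erase Finset.univ (fun j => a j * (x j - m j)) (Finset.mem_univ i)]
end
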